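/- Let q ≥ 1 be an integer, let δ = (1 − (−1)^q)/2 be the parity of q, let a ∈ ℤ with gcd(a,q) = 1, and let k be an integer with 0 < 2k ≤ q. Then the quadratic exponential sum ℰ_k = Σ exp( (2πia/((2−δ)² q)) · (n_1² − n_2² + n_3² − ⋯ + n_{2k−1}² − n_{2k}²) ), where the sum runs over all tuples (n_1,…,n_{2k}) of integers with 0 ≤ n_1 < n_2 < ⋯ < n_{2k} < q such that 4 ∤ (2n_j + 2 − q) for every j, is purely imaginary: Re ℰ_k = 0. -/

import Mathlib

open scoped Classical

/-- `n` is admissible when `4 ∤ (2n + 2 - q)`. -/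
def Adm (q n : ℕ) : Prop := ¬ ((4 : ℤ) ∣ (2 * (n : ℤ) + 2 - (q : ℤ)))

/-- `δ = (1 - (-1)^q)/2`, the parity of `q` (`δ = 1` iff `q` is odd). -/
def par (q : ℕ) : ℤ := (1 - (-1 : ℤ) ^ q) / 2

/-- The quadratic exponential sum `ℰ_k`: the sum of
`exp( (2πia/((2-δ)²q)) · (n_1² - n_2² + ⋯ + n_{2k-1}² - n_{2k}²) )` over all tuples
`0 ≤ n_1 < n_2 < ⋯ < n_{2k} < q` of admissible indices,
encoded as strictly monotone functions `Fin (2k) → Fin q`. -/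
noncomputable def Esum (a : ℤ) (q k : ℕ) : ℂ :=
  ∑ f ∈ Finset.univ.filter
      (fun f : Fin (2 * k) → Fin q => StrictMono f ∧ ∀ j, Adm q (f j)),
    Complex.exp ((2 * Real.pi * Complex.I * (a : ℂ) / (((2 : ℂ) - (par q : ℂ)) ^ 2 * (q : ℂ)))
      * (∑ j : Fin (2 * k), (-1 : ℂ) ^ (j : ℕ) * ((f j : ℕ) : ℂ) ^ 2))

/-!
Write `D = (2 - δ)² q`, so that the summand of `ℰ_k` is `e(a Q(s) / D)`, where `s` is the set
`{n₁ < ⋯ < n_{2k}}` and `Q(s) = n₁² - n₂² + ⋯`; let `S(s) = n₁ - n₂ + ⋯`, so `-q < S(s) < 0`.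
Translating every element of `s` by `2t` modulo `q` preserves admissibility, and since `|s|` is
even it changes the signs of `Q` at most globally. Admissibility is exactly what makes the
wrap-around `n ↦ n + 2t - q` invisible modulo `D`, so the translate has `Q ≡ ±(Q(s) + 4t S(s))`.
Hence `2 Re ℰ_k = Σ_s (e(aQ(s)/D) + e(-aQ(s)/D))` does not change when `Q(s)` is replaced by
`Q(s) + 4t S(s)`. Averaging over `t < q` produces geometric sums in `e(4aS(s)/D)`, a `q`-th root
of unity different from `1` because `q ∤ S(s)` and `gcd(a, q) = 1`; so `q · 2 Re ℰ_k = 0`.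
-/

open Finset

section AltSum

variable {α : Type*} [LinearOrder α]

-- `g n₁ - g n₂ + g n₃ - ⋯` for `s = {n₁ < n₂ < n₃ < ⋯}`
def altSum (s : Finset α) (g : α → ℤ) : ℤ :=
  ∑ n ∈ s, (-1) ^ #{m ∈ s | m < n} * g n

lemma altSum_add (s : Finset α) (f g : α → ℤ) :
    altSum s (fun n => f n + g n) = altSum s f + altSum s g := by
  simp only [altSum, mul_add, sum_add_distrib]

lemma altSum_const_mul (s : Finset α) (c : ℤ) (g : α → ℤ) :
    altSum s (fun n => c * g n) = c * altSum s g := by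
  simp only [altSum, mul_sum]
  exact sum_congr rfl fun _ _ => by ring

lemma altSum_modEq {s : Finset α} {f g : α → ℤ} {N : ℤ} (h : ∀ n ∈ s, f n ≡ g n [ZMOD N]) :
    altSum s f ≡ altSum s g [ZMOD N] :=
  Int.ModEq.sum fun n hn => (h n hn).mul_left _

lemma altSum_image_of_strictMono {m : ℕ} {f : Fin m → α} (hf : StrictMono f) (g : α → ℤ) :
    altSum (univ.image f) g = ∑ j : Fin m, (-1) ^ (j : ℕ) * g (f j) := by
  rw [altSum, sum_image fun i _ j _ h => hf.injective h]
  refine sum_congr rfl fun j _ => ?_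
  rw [filter_image, card_image_of_injective _ hf.injective]
  simp only [hf.lt_iff_lt]
  rw [filter_gt_eq_Iio, Fin.card_Iio]

lemma altSum_const_of_even {s : Finset α} (hs : Even #s) (c : ℤ) : altSum s (fun _ => c) = 0 := by
  rw [← image_orderEmbOfFin_univ s rfl, altSum_image_of_strictMono (orderEmbOfFin s rfl).strictMono,
    ← sum_mul, Fin.sum_univ_eq_sum_range (fun j => (-1 : ℤ) ^ j), neg_one_geom_sum, if_pos hs,
    zero_mul]

lemma altSum_insert_of_forall_lt {s : Finset α} {a : α} (h : ∀ x ∈ s, x < a) (g : α → ℤ) :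
    altSum (insert a s) g = altSum s g + (-1) ^ #s * g a := by
  have ha : a ∉ s := fun ha => lt_irrefl a (h a ha)
  rw [altSum, sum_insert ha, filter_insert, if_neg (lt_irrefl a), filter_true_of_mem h, add_comm]
  congr 1
  refine sum_congr rfl fun x hx => ?_
  rw [filter_insert, if_neg (h x hx).not_gt]

lemma altSum_bounds {g : α → ℤ} (hg : StrictMono g) (hg0 : ∀ n, 0 ≤ g n) (s : Finset α)
    (B : ℤ) (hB : ∀ n ∈ s, g n < B) :
    (Odd #s → 0 ≤ altSum s g ∧ altSum s g < B) ∧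
      (Even #s → s.Nonempty → -B < altSum s g ∧ altSum s g < 0) := by
  induction s using Finset.induction_on_max generalizing B with
  | empty => simp
  | insert a s hlt ih =>
    have hga : g a < B := hB a (mem_insert_self a s)
    obtain ⟨ihodd, iheven⟩ := ih (g a) fun n hn => hg (hlt n hn)
    have hcard : #(insert a s) = #s + 1 := card_insert_of_notMem fun ha => lt_irrefl a (hlt a ha)
    rw [altSum_insert_of_forall_lt hlt, hcard]
    refine ⟨fun hodd => ?_, fun heven _ => ?_⟩
    · have hs : Even #s := by simpa [Nat.odd_add_one] using hodd
      rw [hs.neg_one_pow, one_mul]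
      rcases s.eq_empty_or_nonempty with rfl | hne
      · simp [altSum, hg0 a, hga]
      · have := iheven hs hne
        constructor <;> linarith
    · have hs : Odd #s := by simpa [Nat.even_add_one] using heven
      rw [hs.neg_one_pow]
      have := ihodd hs
      constructor <;> linarith

end AltSum

lemma sum_strictMono_eq_sum_card {α M : Type*} [LinearOrder α] [AddCommMonoid M] {m : ℕ}
    {P : α → Prop} {𝓕 : Finset (Fin m → α)} {𝒮 : Finset (Finset α)}
    (h𝓕 : ∀ f, f ∈ 𝓕 ↔ StrictMono f ∧ ∀ j, P (f j)) (h𝒮 : ∀ s, s ∈ 𝒮 ↔ #s = m ∧ ∀ x ∈ s, P x)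
    (F : Finset α → M) :
    ∑ f ∈ 𝓕, F (univ.image f) = ∑ s ∈ 𝒮, F s := by
  refine sum_bij (fun f _ => univ.image f) (fun f hf => ?_) (fun f₁ hf₁ f₂ hf₂ h => ?_)
    (fun s hs => ?_) (fun _ _ => rfl)
  · obtain ⟨hmono, hP⟩ := (h𝓕 f).1 hf
    refine (h𝒮 _).2 ⟨?_, by simpa using hP⟩
    rw [card_image_of_injective _ hmono.injective, card_univ, Fintype.card_fin]
  · rw [← ((h𝓕 f₁).1 hf₁).1.range_inj ((h𝓕 f₂).1 hf₂).1]
    simpa using congrArg ((↑) : Finset α → Set α) h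
  · obtain ⟨hcard, hP⟩ := (h𝒮 s).1 hs
    exact ⟨s.orderEmbOfFin hcard, (h𝓕 _).2 ⟨(s.orderEmbOfFin hcard).strictMono,
      fun j => hP _ (s.orderEmbOfFin_mem hcard j)⟩, image_orderEmbOfFin_univ s hcard⟩

lemma AddChar.sum_range_map_add_nsmul_eq_zero {G R : Type*} [AddMonoid G] [CommRing R] [IsDomain R]
    (ψ : AddChar G R) {x : G} (hx : ψ x ≠ 1) {q : ℕ} (hq : q • x = 0) (y : G) :
    ∑ t ∈ range q, ψ (y + t • x) = 0 := by
  have hgeom := geom_sum_mul (ψ x) q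
  rw [← ψ.map_nsmul_eq_pow, hq, ψ.map_zero_eq_one, sub_self] at hgeom
  simp only [ψ.map_add_eq_mul, ψ.map_nsmul_eq_pow, ← mul_sum,
    (mul_eq_zero.1 hgeom).resolve_right (sub_ne_zero.2 hx), mul_zero]

section Rotation

variable {q : ℕ}

lemma ite_add_lt_add_right (c m n : Fin q) :
    (if m + c < n + c then 1 else 0) + (if q ≤ n.val + c.val then 1 else 0) =
      (if m < n then 1 else 0) + (if q ≤ m.val + c.val then (1 : ℕ) else 0) := by
  simp only [Fin.lt_def, Fin.val_add_eq_ite]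
  split_ifs <;> omega

lemma card_add_lt_add_right (s : Finset (Fin q)) (c n : Fin q) :
    #{m ∈ s | m + c < n + c} + (if q ≤ n.val + c.val then #s else 0) =
      #{m ∈ s | m < n} + #{m ∈ s | q ≤ m.val + c.val} := by
  have h := sum_congr rfl fun m (_ : m ∈ s) => ite_add_lt_add_right c m n
  simp only [sum_add_distrib, sum_const, smul_eq_mul, mul_ite, mul_one, mul_zero] at h
  simpa only [card_filter] using h

-- Adding `c` moves the elements with `q ≤ m + c` below all the others; as `#s` is even,
-- this multiplies every sign by the same `(-1) ^ #{wrapped elements}`.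
lemma altSum_map_addRight [NeZero q] {s : Finset (Fin q)} (hs : Even #s) (c : Fin q)
    (g : Fin q → ℤ) :
    altSum (s.map (Equiv.addRight c).toEmbedding) g =
      (-1) ^ #{m ∈ s | q ≤ m.val + c.val} * altSum s (fun n => g (n + c)) := by
  rw [altSum, altSum, sum_map, mul_sum]
  refine sum_congr rfl fun n _ => ?_
  have hrank := card_add_lt_add_right s c n
  rw [filter_map, card_map]
  simp only [Equiv.coe_toEmbedding, Equiv.coe_addRight, Function.comp_def]
  calc (-1 : ℤ) ^ #{m ∈ s | m + c < n + c} * g (n + c)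
      = (-1) ^ (#{m ∈ s | m + c < n + c} + if q ≤ n.val + c.val then #s else 0) * g (n + c) := by
        split_ifs <;> simp [pow_add, hs.neg_one_pow]
    _ = _ := by rw [hrank, pow_add]; ring

end Rotation

section Modulus

variable {q : ℕ}

-- `(2 - δ)² q`, the denominator of the phases in `Esum`
def modulus (q : ℕ) : ℕ := if Even q then 4 * q else q

lemma modulus_cast_eq : ((2 : ℂ) - (par q : ℂ)) ^ 2 * (q : ℂ) = (modulus q : ℂ) := by
  have hpar : par q = if Even q then 0 else 1 := by
    rcases Nat.even_or_odd q with hq | hq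
    · simp [par, hq, hq.neg_one_pow]
    · simp [par, Nat.not_even_iff_odd.2 hq, hq.neg_one_pow]
  rw [hpar, modulus]
  split_ifs <;> push_cast <;> ring

lemma modulus_dvd_four_mul : modulus q ∣ 4 * q := by
  unfold modulus; split_ifs
  · exact dvd_rfl
  · exact dvd_mul_left q 4

lemma adm_add_two_mul_iff (n t : ℕ) : Adm q (n + 2 * t) ↔ Adm q n := by
  unfold Adm; push_cast; omega

lemma adm_of_odd (hq : Odd q) (n : ℕ) : Adm q n := by
  obtain ⟨m, rfl⟩ := hq; unfold Adm; push_cast; omega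

lemma adm_mod_iff (n : ℕ) : Adm q (n % q) ↔ Adm q n := by
  rcases Nat.even_or_odd q with ⟨m, rfl⟩ | hq
  · have h := Nat.mod_add_div n (m + m)
    generalize n % (m + m) = r at h ⊢
    generalize n / (m + m) = w at h
    have : (m + m) * w = 2 * (m * w) := by ring
    unfold Adm; push_cast; omega
  · exact iff_of_true (adm_of_odd hq _) (adm_of_odd hq _)

lemma sq_mod_modEq_of_adm {n : ℕ} (hn : Adm q n) :
    ((n % q : ℕ) : ℤ) ^ 2 ≡ (n : ℤ) ^ 2 [ZMOD modulus q] := by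
  rcases Nat.even_or_odd q with ⟨m, rfl⟩ | hq
  · rw [modulus, if_pos ⟨m, rfl⟩, Int.modEq_iff_dvd]
    have h := Nat.mod_add_div n (m + m)
    generalize n % (m + m) = r at h ⊢
    generalize n / (m + m) = w at h
    subst h
    -- admissibility of `n` says exactly that `r ≡ m (mod 2)`
    obtain ⟨v, hv⟩ : (2 : ℤ) ∣ r - m := by
      have : ((m : ℤ) + m) * w = 2 * (m * w) := by ring
      unfold Adm at hn; push_cast at hn; omega
    obtain ⟨u, hu⟩ := Int.even_mul_succ_self (w : ℤ)
    refine ⟨m * u + w * v, ?_⟩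
    push_cast
    linear_combination (4 * m * w) * hv + (4 * m ^ 2) * hu
  · rw [modulus, if_neg (Nat.not_even_iff_odd.2 hq)]
    push_cast
    exact (Int.mod_modEq _ _).pow 2

lemma altSum_val_not_dvd {s : Finset (Fin q)} (hs : Even #s) (hne : s.Nonempty) :
    ¬ (q : ℤ) ∣ altSum s fun n => (n : ℕ) := by
  obtain ⟨hlow, hneg⟩ := (altSum_bounds (g := fun n : Fin q => ((n : ℕ) : ℤ))
    (fun _ _ h => Nat.cast_lt.2 h) (fun n => Nat.cast_nonneg _) s q
    (fun n _ => Nat.cast_lt.2 n.isLt)).2 hs hne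
  intro hdvd
  have := Int.le_of_dvd (by omega) (dvd_neg.2 hdvd)
  omega

lemma intCast_four_mul_ne_zero {a S : ℤ} (ha : Int.gcd a q = 1) (hS : ¬ (q : ℤ) ∣ S) :
    ((4 * a * S : ℤ) : ZMod (modulus q)) ≠ 0 := by
  rw [Ne, ZMod.intCast_zmod_eq_zero_iff_dvd, mul_assoc]
  intro h
  have hqa : IsCoprime (q : ℤ) a := Int.isCoprime_iff_gcd_eq_one.2 (by rwa [Int.gcd_comm])
  refine hS (hqa.dvd_of_dvd_mul_left ?_)
  rcases Nat.even_or_odd q with hq | hq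
  · rw [modulus, if_pos hq, Nat.cast_mul, Nat.cast_ofNat] at h
    exact (mul_dvd_mul_iff_left four_ne_zero).1 h
  · rw [modulus, if_neg (Nat.not_even_iff_odd.2 hq)] at h
    have h2 : IsCoprime (q : ℤ) 2 := Nat.isCoprime_iff_coprime.2 (Nat.coprime_two_right.2 hq)
    exact (show (4 : ℤ) = 2 ^ 2 by norm_num ▸ h2.pow_right).dvd_of_dvd_mul_left h

end Modulus

section Shift

variable {q : ℕ} [NeZero q]

instance : NeZero (modulus q) := ⟨by unfold modulus; split_ifs <;> simp [NeZero.ne q]⟩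

noncomputable def admSets (q m : ℕ) : Finset (Finset (Fin q)) :=
  univ.filter fun s => #s = m ∧ ∀ n ∈ s, Adm q n

lemma Esum_eq_sum_admSets (a : ℤ) (k : ℕ) :
    Esum a q k = ∑ s ∈ admSets q (2 * k),
      ZMod.stdAddChar (((a * altSum s fun n => ((n : ℕ) : ℤ) ^ 2 : ℤ)) : ZMod (modulus q)) := by
  rw [← sum_strictMono_eq_sum_card (P := fun n : Fin q => Adm q n)
    (𝓕 := univ.filter fun f : Fin (2 * k) → Fin q => StrictMono f ∧ ∀ j, Adm q (f j))
    (fun f => by simp) (fun s => by simp [admSets]), Esum]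
  refine sum_congr rfl fun f hf => ?_
  rw [altSum_image_of_strictMono (mem_filter.1 hf).2.1, ZMod.stdAddChar_coe, modulus_cast_eq]
  push_cast
  ring_nf

lemma val_add_ofNat_two_mul (n : Fin q) (t : ℕ) :
    ((n + Fin.ofNat q (2 * t) : Fin q) : ℕ) = (n + 2 * t) % q := by
  rw [Fin.val_add, Fin.val_ofNat, Nat.add_mod_mod]

lemma map_addRight_mem_admSets_iff {s : Finset (Fin q)} {m : ℕ} (t : ℕ) :
    s.map (Equiv.addRight (Fin.ofNat q (2 * t))).toEmbedding ∈ admSets q m ↔ s ∈ admSets q m := by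
  simp only [admSets, mem_filter, mem_univ, true_and, card_map, forall_mem_map,
    Equiv.coe_toEmbedding, Equiv.coe_addRight, val_add_ofNat_two_mul, adm_mod_iff,
    adm_add_two_mul_iff]

lemma altSum_sq_map_addRight_modEq {s : Finset (Fin q)} (hs : Even #s) (hadm : ∀ n ∈ s, Adm q n)
    (t : ℕ) : ∃ d : ℕ,
      altSum (s.map (Equiv.addRight (Fin.ofNat q (2 * t))).toEmbedding) (fun n => ((n : ℕ) : ℤ) ^ 2)
        ≡ (-1) ^ d * (altSum s (fun n => ((n : ℕ) : ℤ) ^ 2) + 4 * t * altSum s (fun n => (n : ℕ)))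
        [ZMOD modulus q] := by
  refine ⟨#{n ∈ s | q ≤ n.val + (Fin.ofNat q (2 * t)).val}, ?_⟩
  rw [altSum_map_addRight hs]
  refine Int.ModEq.mul_left _ ?_
  have hexpand : altSum s (fun n => (((n : ℕ) + 2 * t : ℕ) : ℤ) ^ 2) =
      altSum s (fun n => ((n : ℕ) : ℤ) ^ 2) + 4 * t * altSum s (fun n => (n : ℕ)) := by
    have : ∀ n : Fin q, (((n : ℕ) + 2 * t : ℕ) : ℤ) ^ 2 =
        ((n : ℕ) : ℤ) ^ 2 + ((4 * t * (n : ℕ) : ℤ) + 4 * t ^ 2) := fun n => by push_cast; ring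
    simp only [this, altSum_add, altSum_const_mul, altSum_const_of_even hs, add_zero]
  rw [← hexpand]
  refine altSum_modEq fun n hn => ?_
  rw [val_add_ofNat_two_mul]
  exact sq_mod_modEq_of_adm ((adm_add_two_mul_iff _ _).2 (hadm n hn))

lemma sum_admSets_eq_sum_shift {M : Type*} [AddCommMonoid M] {m : ℕ} (hm : Even m)
    (h : ZMod (modulus q) → M) (hh : ∀ x, h (-x) = h x) (a : ℤ) (t : ℕ) :
    ∑ s ∈ admSets q m, h ((a * altSum s fun n => ((n : ℕ) : ℤ) ^ 2 : ℤ)) =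
      ∑ s ∈ admSets q m, h ((a * (altSum s (fun n => ((n : ℕ) : ℤ) ^ 2) +
        4 * t * altSum s (fun n => (n : ℕ))) : ℤ)) := by
  refine (sum_equiv (Equiv.addRight (Fin.ofNat q (2 * t))).finsetCongr
    (fun s => (map_addRight_mem_admSets_iff t).symm) fun s hs => ?_).symm
  obtain ⟨hcard, hadm⟩ := (mem_filter.1 hs).2
  obtain ⟨d, hd⟩ := altSum_sq_map_addRight_modEq (hcard ▸ hm) hadm t
  rw [Equiv.finsetCongr_apply, (ZMod.intCast_eq_intCast_iff _ _ _).2 (hd.mul_left a)]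
  rcases neg_one_pow_eq_or ℤ d with hd | hd <;>
    simp only [hd, one_mul, neg_one_mul, mul_neg, Int.cast_neg, hh]

lemma sum_range_stdAddChar_add_nsmul_eq_zero {a S : ℤ} (ha : Int.gcd a q = 1)
    (hS : ¬ (q : ℤ) ∣ S) (y : ZMod (modulus q)) :
    ∑ t ∈ range q, ZMod.stdAddChar (y + t • ((4 * a * S : ℤ) : ZMod (modulus q))) = 0 := by
  refine (ZMod.stdAddChar (N := modulus q)).sum_range_map_add_nsmul_eq_zero ?_ ?_ y
  · rw [Ne, ← (ZMod.stdAddChar (N := modulus q)).map_zero_eq_one, ZMod.injective_stdAddChar.eq_iff]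
    exact intCast_four_mul_ne_zero ha hS
  · rw [nsmul_eq_mul, ← Int.cast_natCast, ← Int.cast_mul, ZMod.intCast_zmod_eq_zero_iff_dvd]
    exact (Int.natCast_dvd_natCast.2 modulus_dvd_four_mul).trans ⟨a * S, by push_cast; ring⟩

lemma sum_admSets_stdAddChar_add_neg_eq_zero {a : ℤ} (ha : Int.gcd a q = 1)
    {m : ℕ} (hm : Even m) (hm0 : 0 < m) :
    ∑ s ∈ admSets q m,
      (ZMod.stdAddChar ((a * altSum s fun n => ((n : ℕ) : ℤ) ^ 2 : ℤ) : ZMod (modulus q)) +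
        ZMod.stdAddChar (-((a * altSum s fun n => ((n : ℕ) : ℤ) ^ 2 : ℤ) : ZMod (modulus q)))) =
      0 := by
  set ψ : AddChar (ZMod (modulus q)) ℂ := ZMod.stdAddChar
  set Q : Finset (Fin q) → ℤ := fun s => altSum s fun n => ((n : ℕ) : ℤ) ^ 2
  set S : Finset (Fin q) → ℤ := fun s => altSum s fun n => (n : ℕ)
  set A := ∑ s ∈ admSets q m, (ψ ((a * Q s : ℤ)) + ψ (-(a * Q s : ℤ)))
  suffices (q : ℂ) * A = 0 from (mul_eq_zero.1 this).resolve_left (Nat.cast_ne_zero.2 (NeZero.ne q))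
  calc (q : ℂ) * A = ∑ t ∈ range q, A := by simp
    _ = ∑ t ∈ range q, ∑ s ∈ admSets q m,
          (ψ ((a * (Q s + 4 * t * S s) : ℤ)) + ψ (-((a * (Q s + 4 * t * S s) : ℤ)))) :=
      sum_congr rfl fun t _ => sum_admSets_eq_sum_shift hm
        (fun x => ψ x + ψ (-x)) (fun x => by rw [neg_neg, add_comm]) a t
    _ = ∑ s ∈ admSets q m, ∑ t ∈ range q,
          (ψ ((a * Q s : ℤ) + t • ((4 * a * S s : ℤ) : ZMod (modulus q))) +
            ψ ((-(a * Q s) : ℤ) + t • ((4 * a * (-S s) : ℤ) : ZMod (modulus q)))) := by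
      rw [sum_comm]
      refine sum_congr rfl fun s _ => sum_congr rfl fun t _ => ?_
      simp only [nsmul_eq_mul]
      congr 2 <;> push_cast <;> ring
    _ = 0 := sum_eq_zero fun s hs => by
      obtain ⟨hcard, -⟩ := (mem_filter.1 hs).2
      have hS : ¬ (q : ℤ) ∣ S s := altSum_val_not_dvd (hcard ▸ hm) (card_pos.1 (hcard ▸ hm0))
      rw [sum_add_distrib, sum_range_stdAddChar_add_nsmul_eq_zero ha hS,
        sum_range_stdAddChar_add_nsmul_eq_zero ha (by rwa [dvd_neg]), add_zero]

end Shift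

theorem stmt7_general (q : ℕ) (hq : 1 ≤ q) (a : ℤ) (ha : Int.gcd a (q : ℤ) = 1)
    (k : ℕ) (hk : 0 < 2 * k) :
    (Esum a q k).re = 0 := by
  have : NeZero q := ⟨by omega⟩
  have h2re : ((2 * (Esum a q k).re : ℝ) : ℂ) = 0 := by
    rw [← Complex.add_conj, Esum_eq_sum_admSets, map_sum, ← sum_add_distrib,
      ← sum_admSets_stdAddChar_add_neg_eq_zero ha (even_two_mul k) hk]
    simp only [AddChar.map_neg_eq_conj]
  have : 2 * (Esum a q k).re = 0 := by exact_mod_cast h2re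
  linarith

theorem stmt7 (q : ℕ) (hq : 1 ≤ q) (a : ℤ) (ha : Int.gcd a (q : ℤ) = 1)
    (k : ℕ) (hk : 0 < 2 * k) (hkq : 2 * k ≤ q) :
    (Esum a q k).re = 0 :=
  stmt7_general q hq a ha k hk
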